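/- arXiv:1704.05274 — 4 statements merged into one kernel-verified Lean document; each statement's English description precedes it below -/
import Mathlib

section
/- Let A be a set with ternary operations p, j_1, ..., j_k (k ≥ 2) satisfying the directed Gumm identities: p(x,z,z) = x; p(x,x,z) = j_1(x,x,z); j_i(x,y,x) = x for 1 ≤ i ≤ k; j_i(x,z,z) = j_{i+1}(x,x,z) for 1 ≤ i < k; and j_k(x,y,z) = z. Let R, V, W be reflexive binary relations on A compatible with all of p, j_1, ..., j_k, and suppose a R c, a V b, and b W c for some a, b, c ∈ A. Then a (R ∩ (V ∘ W)) j_1(a, a, j_1(a,a,c)); that is, letting u = j_1(a,a,j_1(a,a,c)), one has a R u and there exists an element v with a V v and v W u. -/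
/-- Compatibility of a binary relation with a ternary operation. -/
def Compat3 {A : Type*} (t : A → A → A → A) (R : A → A → Prop) : Prop :=
  ∀ a₁ a₂ a₃ b₁ b₂ b₃ : A, R a₁ b₁ → R a₂ b₂ → R a₃ b₃ →
    R (t a₁ a₂ a₃) (t b₁ b₂ b₃)

theorem stmt_6 {A : Type*} (k : ℕ) (hk : 2 ≤ k)
    (p : A → A → A → A) (j : ℕ → A → A → A → A)
    (DG1 : ∀ x z : A, p x z z = x)
    (DG2 : ∀ x z : A, p x x z = j 1 x x z)
    (DG3 : ∀ i, 1 ≤ i → i ≤ k → ∀ x y : A, j i x y x = x)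
    (DG4 : ∀ i, 1 ≤ i → i < k → ∀ x z : A, j i x z z = j (i + 1) x x z)
    (DG5 : ∀ x y z : A, j k x y z = z)
    (R V W : A → A → Prop)
    (hRrefl : Reflexive R) (hVrefl : Reflexive V) (hWrefl : Reflexive W)
    (hRp : Compat3 p R) (hVp : Compat3 p V) (hWp : Compat3 p W)
    (hRj : ∀ i, 1 ≤ i → i ≤ k → Compat3 (j i) R)
    (hVj : ∀ i, 1 ≤ i → i ≤ k → Compat3 (j i) V)
    (hWj : ∀ i, 1 ≤ i → i ≤ k → Compat3 (j i) W)
    (a b c : A) (hac : R a c) (hab : V a b) (hbc : W b c) :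
    R a (j 1 a a (j 1 a a c)) ∧
    ∃ v : A, V a v ∧ W v (j 1 a a (j 1 a a c)) := by
  have h1k : (1:ℕ) ≤ k := le_trans one_le_two hk
  have hR1 := hRj 1 le_rfl h1k
  have hV1 := hVj 1 le_rfl h1k
  have hW1 := hWj 1 le_rfl h1k
  have haa : j 1 a a a = a := DG3 1 le_rfl h1k a a
  constructor
  · have h1 : R a (j 1 a a c) := by
      have := hR1 a a a a a c (hRrefl a) (hRrefl a) hac
      rwa [haa] at this
    have := hR1 a a a a a (j 1 a a c) (hRrefl a) (hRrefl a) h1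
    rwa [haa] at this
  · refine ⟨j 1 a a (j 1 a a b), ?_, ?_⟩
    · have h1 : V a (j 1 a a b) := by
        have := hV1 a a a a a b (hVrefl a) (hVrefl a) hab
        rwa [haa] at this
      have := hV1 a a a a a (j 1 a a b) (hVrefl a) (hVrefl a) h1
      rwa [haa] at this
    · have h1 : W (j 1 a a b) (j 1 a a c) :=
        hW1 a a b a a c (hWrefl a) (hWrefl a) hbc
      exact hW1 a a (j 1 a a b) a a (j 1 a a c) (hWrefl a) (hWrefl a) h1
end

section
/- Let A be a set with quaternary operations d_0, d_1, ..., d_k satisfying the Day identities: d_i(x,y,y,x) = x for all i; d_0(x,y,z,w) = x; d_i(x,x,w,w) = d_{i+1}(x,x,w,w) for even i < k; d_i(x,y,y,w) = d_{i+1}(x,y,y,w) for odd i < k; and d_k(x,y,z,w) = w. Let Θ be a reflexive symmetric binary relation on A compatible with all d_i, and let S be a binary relation compatible with all d_i. If a Θ c, a S b, and c S b, then for all indices i, j ≤ k one has d_i(a,a,c,c) Θ d_j(a,b,b,c). -/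
/-- Compatibility of a binary relation with a quaternary operation. -/
def Compat4 {A : Type*} (t : A → A → A → A → A) (R : A → A → Prop) : Prop :=
  ∀ a₁ a₂ a₃ a₄ b₁ b₂ b₃ b₄ : A, R a₁ b₁ → R a₂ b₂ → R a₃ b₃ → R a₄ b₄ →
    R (t a₁ a₂ a₃ a₄) (t b₁ b₂ b₃ b₄)

theorem stmt_8 {A : Type*} (k : ℕ) (d : ℕ → A → A → A → A → A)
    (Day1 : ∀ i, i ≤ k → ∀ x y : A, d i x y y x = x)
    (Day2 : ∀ x y z w : A, d 0 x y z w = x)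
    (Day3 : ∀ i, i < k → Even i → ∀ x w : A, d i x x w w = d (i + 1) x x w w)
    (Day4 : ∀ i, i < k → Odd i → ∀ x y w : A, d i x y y w = d (i + 1) x y y w)
    (Day5 : ∀ x y z w : A, d k x y z w = w)
    (Θ : A → A → Prop) (hΘrefl : Reflexive Θ) (hΘsymm : Symmetric Θ)
    (hΘd : ∀ i, i ≤ k → Compat4 (d i) Θ)
    (S : A → A → Prop) (hSd : ∀ i, i ≤ k → Compat4 (d i) S)
    (a b c : A) (hac : Θ a c) (hab : S a b) (hcb : S c b) :
    ∀ i j, i ≤ k → j ≤ k → Θ (d i a a c c) (d j a b b c) := by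
  intro i j hi hj
  have h := hΘd i hi (d j a b b a) a c (d j c b b c) (d j a b b c) c c (d j a b b c)
    (hΘd j hj a b b a a b b c (hΘrefl a) (hΘrefl b) (hΘrefl b) hac)
    hac (hΘrefl c)
    (hΘd j hj c b b c a b b c (hΘsymm hac) (hΘrefl b) (hΘrefl b) (hΘrefl c))
  rwa [Day1 j hj a b, Day1 j hj c b, Day1 i hi] at h
end

section
/- Let A be a set with quaternary operations d_0, ..., d_k (k ≥ 1) satisfying the Day identities. Let Θ be a reflexive symmetric binary relation on A compatible with all d_i, and let S be a reflexive binary relation on A compatible with all d_i. Then Θ ∩ (S ∘ S˘) ⊆ (Θ ∩ S) ∘_{k-1} (Θ ∩ S˘), where ∘_{k-1} denotes alternating composition with k−1 factors starting with Θ ∩ S. -/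
/-- Relational composition. -/
def comp {A : Type*} (R S : A → A → Prop) : A → A → Prop :=
  fun a c => ∃ b, R a b ∧ S b c

/-- `altComp S T m`: the alternating composition `S ∘ T ∘ S ∘ ...` with `m` factors,
starting with `S`; `altComp S T 0` is the equality relation. -/
def altComp {A : Type*} (S T : A → A → Prop) : ℕ → A → A → Prop
  | 0 => Eq
  | n + 1 => comp S (altComp T S n)

/-- Converse of a relation. -/
def conv {A : Type*} (R : A → A → Prop) : A → A → Prop := fun a b => R b a

theorem stmt_9 {A : Type*} (k : ℕ) (hk : 1 ≤ k) (d : ℕ → A → A → A → A → A)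
    (Day1 : ∀ i, i ≤ k → ∀ x y : A, d i x y y x = x)
    (Day2 : ∀ x y z w : A, d 0 x y z w = x)
    (Day3 : ∀ i, i < k → Even i → ∀ x w : A, d i x x w w = d (i + 1) x x w w)
    (Day4 : ∀ i, i < k → Odd i → ∀ x y w : A, d i x y y w = d (i + 1) x y y w)
    (Day5 : ∀ x y z w : A, d k x y z w = w)
    (Θ : A → A → Prop) (hΘrefl : Reflexive Θ) (hΘsymm : Symmetric Θ)
    (hΘd : ∀ i, i ≤ k → Compat4 (d i) Θ)
    (S : A → A → Prop) (hSrefl : Reflexive S) (hSd : ∀ i, i ≤ k → Compat4 (d i) S) :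
    ∀ a c : A, Θ a c → comp S (conv S) a c →
      altComp (fun x y => Θ x y ∧ S x y) (fun x y => Θ x y ∧ conv S x y) (k - 1) a c := by
  intro a c hac hss
  obtain ⟨b, hab, hcb⟩ := hss
  -- hcb : conv S b c, i.e. S c b
  have hcb' : S c b := hcb
  -- abbreviations
  have hSuv : ∀ i, i ≤ k → S (d i a a c c) (d i a b b c) := fun i hi =>
    hSd i hi a a c c a b b c (hSrefl a) hab hcb' (hSrefl c)
  have hΘua : ∀ i, i ≤ k → Θ (d i a a c c) a := by
    intro i hi
    have h := hΘd i hi a a c c a c c a (hΘrefl a) hac (hΘrefl c) (hΘsymm hac)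
    rwa [Day1 i hi a c] at h
  have hΘuc : ∀ i, i ≤ k → Θ (d i a a c c) c := by
    intro i hi
    have h := hΘd i hi a a c c c c c c hac hac (hΘrefl c) (hΘrefl c)
    rwa [Day1 i hi c c] at h
  have hΘuv : ∀ i, i ≤ k → Θ (d i a a c c) (d i a b b c) := by
    intro i hi
    have h := hΘd i hi (d i a a c c) b b (d i a a c c) a b b c
      (hΘua i hi) (hΘrefl b) (hΘrefl b) (hΘuc i hi)
    rwa [Day1 i hi (d i a a c c) b] at h
  have key : ∀ m, ∀ j, j + m = k - 1 →
      (j % 2 = 0 → altComp (fun x y => Θ x y ∧ S x y) (fun x y => Θ x y ∧ conv S x y) m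
        (d (j+1) a a c c) c) ∧
      (j % 2 = 1 → altComp (fun x y => Θ x y ∧ conv S x y) (fun x y => Θ x y ∧ S x y) m
        (d j a b b c) c) := by
    intro m
    induction m with
    | zero =>
      intro j hj
      constructor
      · intro _
        have hjk : j + 1 = k := by omega
        show d (j+1) a a c c = c
        rw [hjk]
        exact Day5 a a c c
      · intro hjo
        show d j a b b c = c
        have hjk : j = k - 1 := by omega
        have hlt : j < k := by omega
        have h4 := Day4 j hlt (Nat.odd_iff.2 hjo) a b c
        have hjk1 : j + 1 = k := by omega
        rw [h4, hjk1, Day5]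
    | succ m ih =>
      intro j hj
      constructor
      · -- j even: step (Θ∩S) from u (j+1) to v (j+1)
        intro hje
        have hj1 : j + 1 ≤ k := by omega
        refine ⟨d (j+1) a b b c, ⟨hΘuv (j+1) hj1, hSuv (j+1) hj1⟩, ?_⟩
        exact (ih (j+1) (by omega)).2 (by omega)
      · -- j odd: step (Θ∩S˘) from v j to u (j+2)
        intro hjo
        have hj1 : j + 1 ≤ k := by omega
        have hvj : d j a b b c = d (j+1) a b b c :=
          Day4 j (by omega) (Nat.odd_iff.2 hjo) a b c
        have huj : d (j+1) a a c c = d (j+2) a a c c :=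
          Day3 (j+1) (by omega) (Nat.even_iff.2 (by omega)) a c
        refine ⟨d (j+2) a a c c, ⟨?_, ?_⟩, ?_⟩
        · rw [hvj, ← huj]
          exact hΘsymm (hΘuv (j+1) hj1)
        · show S (d (j+2) a a c c) (d j a b b c)
          rw [hvj, ← huj]
          exact hSuv (j+1) hj1
        · exact (ih (j+1) (by omega)).1 (by omega)
  have h0 := (key (k-1) 0 (by omega)).1 (by norm_num)
  have hu1 : d 1 a a c c = a := by
    have h := Day3 0 (by omega) Even.zero a c
    rw [Day2] at h
    exact h.symm
  rwa [hu1] at h0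
end

section
/- Let A be a set with ternary operations p, j_1, ..., j_k (k ≥ 2) satisfying the directed Gumm identities (DG1)–(DG5). Let R, V, W be reflexive binary relations on A compatible with all the operations, with R additionally symmetric, and suppose a R c, a V b, b W c. Then a R p(a,a,c), a (V˘ ∘ W) p(a,a,c), and p(a,a,c) = j_1(a,a,c); that is, a (R ∩ (V˘ ∘ W)) j_1(a,a,c). -/
theorem stmt_13 {A : Type*} (k : ℕ) (hk : 2 ≤ k)
    (p : A → A → A → A) (j : ℕ → A → A → A → A)
    (DG1 : ∀ x z : A, p x z z = x)
    (DG2 : ∀ x z : A, p x x z = j 1 x x z)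
    (DG3 : ∀ i, 1 ≤ i → i ≤ k → ∀ x y : A, j i x y x = x)
    (DG4 : ∀ i, 1 ≤ i → i < k → ∀ x z : A, j i x z z = j (i + 1) x x z)
    (DG5 : ∀ x y z : A, j k x y z = z)
    (R V W : A → A → Prop)
    (hRrefl : Reflexive R) (hRsymm : Symmetric R)
    (hVrefl : Reflexive V) (hWrefl : Reflexive W)
    (hRp : Compat3 p R) (hVp : Compat3 p V) (hWp : Compat3 p W)
    (hRj : ∀ i, 1 ≤ i → i ≤ k → Compat3 (j i) R)
    (hVj : ∀ i, 1 ≤ i → i ≤ k → Compat3 (j i) V)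
    (hWj : ∀ i, 1 ≤ i → i ≤ k → Compat3 (j i) W)
    (a b c : A) (hac : R a c) (hab : V a b) (hbc : W b c) :
    R a (p a a c) ∧ comp (conv V) W a (p a a c) ∧ p a a c = j 1 a a c := by
  refine ⟨?_, ⟨p a a b, ?_, ?_⟩, DG2 a c⟩
  · have h := hRp a c c a a c (hRrefl a) (hRsymm hac) (hRrefl c)
    rwa [DG1] at h
  · have h := hVp a a b a b b (hVrefl a) hab (hVrefl b)
    rwa [DG1] at h
  · exact hWp a a b a a c (hWrefl a) (hWrefl a) hbc
end
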